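/- The Gromov-Hausdorff monoid distance Υ satisfies the triangle inequality: for any three proper metric monoids (G₁,δ₁), (G₂,δ₂), (G₃,δ₃), Υ((G₁,δ₁),(G₃,δ₃)) ≤ Υ((G₁,δ₁),(G₂,δ₂)) + Υ((G₂,δ₂),(G₃,δ₃)). -/
import Mathlib


/-- A metric on a monoid is left invariant when left translations are isometric. -/
def LeftInvariant (G : Type*) [Monoid G] [MetricSpace G] : Prop :=
  ∀ h g g' : G, dist (h * g) (h * g') = dist g g'

/-- An `r`-local `ε`-almost isometric isomorphism between two metric monoids. -/
def AlmostIsoIso {G₁ G₂ : Type*} [Monoid G₁] [MetricSpace G₁]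
    [Monoid G₂] [MetricSpace G₂] (ς₁ : G₁ → G₂) (ς₂ : G₂ → G₁) (ε r : ℝ) : Prop :=
  ς₁ 1 = 1 ∧ ς₂ 1 = 1 ∧
  (∀ g ∈ Metric.closedBall (1 : G₁) r, ∀ g' ∈ Metric.closedBall (1 : G₁) r,
    ∀ h ∈ Metric.closedBall (1 : G₂) r,
      |dist (ς₁ g * ς₁ g') h - dist (g * g') (ς₂ h)| ≤ ε) ∧
  (∀ g ∈ Metric.closedBall (1 : G₂) r, ∀ g' ∈ Metric.closedBall (1 : G₂) r,
    ∀ h ∈ Metric.closedBall (1 : G₁) r,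
      |dist (ς₂ g * ς₂ g') h - dist (g * g') (ς₁ h)| ≤ ε)

/-- The Gromov-Hausdorff monoid distance between two metric monoids. -/
noncomputable def Upsilon (G H : Type*) [Monoid G] [MetricSpace G]
    [Monoid H] [MetricSpace H] : ℝ :=
  min (Real.sqrt 2 / 2)
    (sInf {ε : ℝ | 0 < ε ∧ ∃ ς : G → H, ∃ κ : H → G, AlmostIsoIso ς κ ε (1 / ε)})

/-- The constant-one maps give a trivial almost isometric isomorphism at `ε = 2`. -/
lemma leftInvariant_dist_mul_one {K : Type*} [Monoid K] [MetricSpace K]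
    (hinv : LeftInvariant K) {g g' : K} (hg : g ∈ Metric.closedBall (1 : K) (1/2))
    (hg' : g' ∈ Metric.closedBall (1 : K) (1/2)) : dist (g * g') 1 ≤ 1 := by
  rw [Metric.mem_closedBall] at hg hg'
  calc dist (g * g') 1 ≤ dist (g * g') (g * 1) + dist (g * 1) 1 := dist_triangle _ _ _
    _ = dist g' 1 + dist g 1 := by rw [hinv, mul_one]
    _ ≤ 1 := by linarith

lemma almostIsoIso_trivial {G H : Type*} [Monoid G] [MetricSpace G]
    [Monoid H] [MetricSpace H] (hinvG : LeftInvariant G) (hinvH : LeftInvariant H) :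
    AlmostIsoIso (fun _ : G => (1 : H)) (fun _ : H => (1 : G)) 2 (1 / 2) := by
  refine ⟨rfl, rfl, ?_, ?_⟩
  · intro g hg g' hg' h hh
    rw [Metric.mem_closedBall] at hh
    have h1 := leftInvariant_dist_mul_one hinvG hg hg'
    have h2 : dist ((1:H) * 1) h ≤ 1/2 := by rw [one_mul, dist_comm]; exact hh
    have h3 : (0:ℝ) ≤ dist ((1:H) * 1) h := dist_nonneg
    have h4 : (0:ℝ) ≤ dist (g * g') (1:G) := dist_nonneg
    rw [abs_le]; constructor <;> linarith
  · intro g hg g' hg' h hh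
    rw [Metric.mem_closedBall] at hh
    have h1 := leftInvariant_dist_mul_one hinvH hg hg'
    have h2 : dist ((1:G) * 1) h ≤ 1/2 := by rw [one_mul, dist_comm]; exact hh
    have h3 : (0:ℝ) ≤ dist ((1:G) * 1) h := dist_nonneg
    have h4 : (0:ℝ) ≤ dist (g * g') (1:H) := dist_nonneg
    rw [abs_le]; constructor <;> linarith

/-- Near-identity estimate for the forward map. -/
lemma almostIsoIso_dist_one_fwd {G H : Type*} [Monoid G] [MetricSpace G]
    [Monoid H] [MetricSpace H] {ς : G → H} {κ : H → G} {ε r : ℝ} (hr : 0 ≤ r)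
    (h : AlmostIsoIso ς κ ε r) {g : G} (hg : g ∈ Metric.closedBall (1 : G) r) :
    dist (ς g) 1 ≤ dist g 1 + ε := by
  obtain ⟨e1, e2, A, _⟩ := h
  have h1 : (1 : G) ∈ Metric.closedBall (1 : G) r := Metric.mem_closedBall_self hr
  have h2 : (1 : H) ∈ Metric.closedBall (1 : H) r := Metric.mem_closedBall_self hr
  have := A g hg 1 h1 1 h2
  rw [e1, e2, mul_one, mul_one] at this
  have := (abs_le.mp this).2
  linarith

/-- Near-identity estimate for the backward map. -/
lemma almostIsoIso_dist_one_bwd {G H : Type*} [Monoid G] [MetricSpace G]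
    [Monoid H] [MetricSpace H] {ς : G → H} {κ : H → G} {ε r : ℝ} (hr : 0 ≤ r)
    (h : AlmostIsoIso ς κ ε r) {g : H} (hg : g ∈ Metric.closedBall (1 : H) r) :
    dist (κ g) 1 ≤ dist g 1 + ε := by
  obtain ⟨e1, e2, _, B⟩ := h
  have h1 : (1 : G) ∈ Metric.closedBall (1 : G) r := Metric.mem_closedBall_self hr
  have h2 : (1 : H) ∈ Metric.closedBall (1 : H) r := Metric.mem_closedBall_self hr
  have := B g hg 1 h2 1 h1
  rw [e1, e2, mul_one, mul_one] at this
  have := (abs_le.mp this).2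
  linarith

/-- Composition of almost isometric isomorphisms. -/
lemma almostIsoIso_comp {G₁ G₂ G₃ : Type*} [Monoid G₁] [MetricSpace G₁]
    [Monoid G₂] [MetricSpace G₂] [Monoid G₃] [MetricSpace G₃]
    {ς₁ : G₁ → G₂} {κ₁ : G₂ → G₁} {ς₂ : G₂ → G₃} {κ₂ : G₃ → G₂} {ε₁ ε₂ : ℝ}
    (hε₁ : 0 < ε₁) (hε₂ : 0 < ε₂) (hsum : ε₁ + ε₂ ≤ 1)
    (h₁ : AlmostIsoIso ς₁ κ₁ ε₁ (1 / ε₁)) (h₂ : AlmostIsoIso ς₂ κ₂ ε₂ (1 / ε₂)) :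
    AlmostIsoIso (ς₂ ∘ ς₁) (κ₁ ∘ κ₂) (ε₁ + ε₂) (1 / (ε₁ + ε₂)) := by
  have hε : 0 < ε₁ + ε₂ := by linarith
  have hr₁ : (0:ℝ) ≤ 1 / ε₁ := by positivity
  have hr₂ : (0:ℝ) ≤ 1 / ε₂ := by positivity
  set R : ℝ := 1 / (ε₁ + ε₂) with hR
  have mono₁ : R ≤ 1 / ε₁ := by
    apply one_div_le_one_div_of_le hε₁; linarith
  have mono₂ : R ≤ 1 / ε₂ := by
    apply one_div_le_one_div_of_le hε₂; linarith
  have key₁ : R + ε₁ ≤ 1 / ε₂ := by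
    rw [← sub_nonneg]
    have heq : 1 / ε₂ - (R + ε₁) = (ε₁ * (1 - ε₂ * (ε₁ + ε₂))) / (ε₂ * (ε₁ + ε₂)) := by
      rw [hR]; field_simp; ring
    rw [heq]
    apply div_nonneg _ (by positivity)
    have : ε₂ * (ε₁ + ε₂) ≤ 1 := by nlinarith
    nlinarith
  have key₂ : R + ε₂ ≤ 1 / ε₁ := by
    rw [← sub_nonneg]
    have heq : 1 / ε₁ - (R + ε₂) = (ε₂ * (1 - ε₁ * (ε₁ + ε₂))) / (ε₁ * (ε₁ + ε₂)) := by
      rw [hR]; field_simp; ring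
    rw [heq]
    apply div_nonneg _ (by positivity)
    have : ε₁ * (ε₁ + ε₂) ≤ 1 := by nlinarith
    nlinarith
  have sub₁ : Metric.closedBall (1:G₁) R ⊆ Metric.closedBall (1:G₁) (1/ε₁) :=
    Metric.closedBall_subset_closedBall mono₁
  have sub₃ : Metric.closedBall (1:G₃) R ⊆ Metric.closedBall (1:G₃) (1/ε₂) :=
    Metric.closedBall_subset_closedBall mono₂
  -- forward map sends the R-ball of G₁ into the (1/ε₂)-ball of G₂
  have mapς : ∀ g ∈ Metric.closedBall (1:G₁) R, ς₁ g ∈ Metric.closedBall (1:G₂) (1/ε₂) := by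
    intro g hg
    rw [Metric.mem_closedBall]
    have h1 := almostIsoIso_dist_one_fwd hr₁ h₁ (sub₁ hg)
    rw [Metric.mem_closedBall] at hg
    calc dist (ς₁ g) 1 ≤ dist g 1 + ε₁ := h1
      _ ≤ R + ε₁ := by linarith
      _ ≤ 1 / ε₂ := key₁
  -- backward map sends the R-ball of G₃ into the (1/ε₁)-ball of G₂
  have mapκ : ∀ h ∈ Metric.closedBall (1:G₃) R, κ₂ h ∈ Metric.closedBall (1:G₂) (1/ε₁) := by
    intro h hh
    rw [Metric.mem_closedBall]
    have h1 := almostIsoIso_dist_one_bwd hr₂ h₂ (sub₃ hh)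
    rw [Metric.mem_closedBall] at hh
    calc dist (κ₂ h) 1 ≤ dist h 1 + ε₂ := h1
      _ ≤ R + ε₂ := by linarith
      _ ≤ 1 / ε₁ := key₂
  obtain ⟨e1, k1, A1, B1⟩ := h₁
  obtain ⟨e2, k2, A2, B2⟩ := h₂
  refine ⟨by simp [Function.comp, e1, e2], by simp [Function.comp, k1, k2], ?_, ?_⟩
  · intro g hg g' hg' h hh
    simp only [Function.comp_apply]
    have t2 := A2 (ς₁ g) (mapς g hg) (ς₁ g') (mapς g' hg') h (sub₃ hh)
    have t1 := A1 g (sub₁ hg) g' (sub₁ hg') (κ₂ h) (mapκ h hh)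
    calc |dist (ς₂ (ς₁ g) * ς₂ (ς₁ g')) h - dist (g * g') (κ₁ (κ₂ h))|
        ≤ |dist (ς₂ (ς₁ g) * ς₂ (ς₁ g')) h - dist (ς₁ g * ς₁ g') (κ₂ h)|
          + |dist (ς₁ g * ς₁ g') (κ₂ h) - dist (g * g') (κ₁ (κ₂ h))| := abs_sub_le _ _ _
      _ ≤ ε₁ + ε₂ := by linarith
  · intro g hg g' hg' h hh
    simp only [Function.comp_apply]
    have t1 := B1 (κ₂ g) (mapκ g hg) (κ₂ g') (mapκ g' hg') h (sub₁ hh)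
    have t2 := B2 g (sub₃ hg) g' (sub₃ hg') (ς₁ h) (mapς h hh)
    calc |dist (κ₁ (κ₂ g) * κ₁ (κ₂ g')) h - dist (g * g') (ς₂ (ς₁ h))|
        ≤ |dist (κ₁ (κ₂ g) * κ₁ (κ₂ g')) h - dist (κ₂ g * κ₂ g') (ς₁ h)|
          + |dist (κ₂ g * κ₂ g') (ς₁ h) - dist (g * g') (ς₂ (ς₁ h))| := abs_sub_le _ _ _
      _ ≤ ε₁ + ε₂ := by linarith

theorem upsilon_triangle {G₁ G₂ G₃ : Type*}
    [Monoid G₁] [MetricSpace G₁] [ProperSpace G₁]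
    [Monoid G₂] [MetricSpace G₂] [ProperSpace G₂]
    [Monoid G₃] [MetricSpace G₃] [ProperSpace G₃]
    (hinv₁ : LeftInvariant G₁) (hinv₂ : LeftInvariant G₂) (hinv₃ : LeftInvariant G₃)
    (hcont₁ : Continuous fun p : G₁ × G₁ => p.1 * p.2)
    (hcont₂ : Continuous fun p : G₂ × G₂ => p.1 * p.2)
    (hcont₃ : Continuous fun p : G₃ × G₃ => p.1 * p.2) :
    Upsilon G₁ G₃ ≤ Upsilon G₁ G₂ + Upsilon G₂ G₃ := by
  set c : ℝ := Real.sqrt 2 / 2 with hc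
  have hc1 : c < 1 := by
    rw [hc, div_lt_iff₀ (by norm_num : (0:ℝ) < 2)]
    calc Real.sqrt 2 < 2 := by
          have : Real.sqrt 2 < Real.sqrt 4 := by
            apply Real.sqrt_lt_sqrt <;> norm_num
          have h4 : Real.sqrt 4 = 2 := by
            rw [show (4:ℝ) = 2^2 by norm_num, Real.sqrt_sq (by norm_num : (0:ℝ) ≤ 2)]
          linarith
      _ = 1 * 2 := by ring
  set S₁₂ := {ε : ℝ | 0 < ε ∧ ∃ ς : G₁ → G₂, ∃ κ : G₂ → G₁, AlmostIsoIso ς κ ε (1 / ε)}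
    with hS12
  set S₂₃ := {ε : ℝ | 0 < ε ∧ ∃ ς : G₂ → G₃, ∃ κ : G₃ → G₂, AlmostIsoIso ς κ ε (1 / ε)}
    with hS23
  set S₁₃ := {ε : ℝ | 0 < ε ∧ ∃ ς : G₁ → G₃, ∃ κ : G₃ → G₁, AlmostIsoIso ς κ ε (1 / ε)}
    with hS13
  have hU12 : Upsilon G₁ G₂ = min c (sInf S₁₂) := rfl
  have hU23 : Upsilon G₂ G₃ = min c (sInf S₂₃) := rfl
  have hU13 : Upsilon G₁ G₃ = min c (sInf S₁₃) := rfl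
  have hne12 : S₁₂.Nonempty := ⟨2, by norm_num, _, _, almostIsoIso_trivial hinv₁ hinv₂⟩
  have hne23 : S₂₃.Nonempty := ⟨2, by norm_num, _, _, almostIsoIso_trivial hinv₂ hinv₃⟩
  have hbdd13 : BddBelow S₁₃ := ⟨0, fun x hx => hx.1.le⟩
  apply le_of_forall_pos_le_add
  intro η hη
  rcases le_or_gt c (Upsilon G₁ G₂ + Upsilon G₂ G₃ + η) with hcase | hcase
  · calc Upsilon G₁ G₃ ≤ c := by rw [hU13]; exact min_le_left _ _
      _ ≤ _ := hcase
  · -- then both Upsilons are the infima and everything is small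
    have ha : Upsilon G₁ G₂ < c := by
      have h0 : 0 ≤ Upsilon G₂ G₃ := by
        rw [hU23]
        apply le_min (by positivity)
        exact Real.sInf_nonneg (fun x hx => hx.1.le)
      linarith
    have hb : Upsilon G₂ G₃ < c := by
      have h0 : 0 ≤ Upsilon G₁ G₂ := by
        rw [hU12]
        apply le_min (by positivity)
        exact Real.sInf_nonneg (fun x hx => hx.1.le)
      linarith
    have ha' : Upsilon G₁ G₂ = sInf S₁₂ := by
      rw [hU12]
      rcases min_cases c (sInf S₁₂) with ⟨h, h'⟩ | ⟨h, _⟩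
      · rw [hU12] at ha; rw [h] at ha; exact absurd ha (lt_irrefl c)
      · exact h
    have hb' : Upsilon G₂ G₃ = sInf S₂₃ := by
      rw [hU23]
      rcases min_cases c (sInf S₂₃) with ⟨h, h'⟩ | ⟨h, _⟩
      · rw [hU23] at hb; rw [h] at hb; exact absurd hb (lt_irrefl c)
      · exact h
    obtain ⟨ε₁, hε₁S, hε₁lt⟩ : ∃ ε₁ ∈ S₁₂, ε₁ < Upsilon G₁ G₂ + η / 2 := by
      apply exists_lt_of_csInf_lt hne12
      rw [← ha']; linarith
    obtain ⟨ε₂, hε₂S, hε₂lt⟩ : ∃ ε₂ ∈ S₂₃, ε₂ < Upsilon G₂ G₃ + η / 2 := by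
      apply exists_lt_of_csInf_lt hne23
      rw [← hb']; linarith
    obtain ⟨hε₁pos, ς₁, κ₁, hai₁⟩ := hε₁S
    obtain ⟨hε₂pos, ς₂, κ₂, hai₂⟩ := hε₂S
    have hsum1 : ε₁ + ε₂ ≤ 1 := by linarith
    have hmem : ε₁ + ε₂ ∈ S₁₃ := by
      refine ⟨by linarith, ς₂ ∘ ς₁, κ₁ ∘ κ₂, ?_⟩
      exact almostIsoIso_comp hε₁pos hε₂pos hsum1 hai₁ hai₂
    calc Upsilon G₁ G₃ ≤ sInf S₁₃ := by rw [hU13]; exact min_le_right _ _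
      _ ≤ ε₁ + ε₂ := csInf_le hbdd13 hmem
      _ ≤ _ := by linarith
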